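/- arXiv:1901.04465 — 5 statements merged into one kernel-verified Lean document; each statement's English description precedes it below -/
import Mathlib

section
/- The number of monotonic lattice paths from (0,0) to (n,k) with unit right/up steps that never cross above the line y = x + m − 1 (i.e., every visited point (a,b) satisfies b ≤ a + m − 1) equals the Catalan trapezoid entry D_m(n,k), for m ≥ 1 and 0 ≤ k ≤ n+m−1. -/
/-- A monotonic lattice path is encoded as a list of steps: `true` = right, `false` = up.
`pathPoints p` is the list of lattice points visited, starting at `(0,0)`. -/
def pathPoints (p : List Bool) : List (Nat × Nat) :=
  p.scanl (fun q s => if s then (q.1 + 1, q.2) else (q.1, q.2 + 1)) (0, 0)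

/-- The endpoint of a monotonic path starting at `(0,0)`. -/
def pathEnd (p : List Bool) : Nat × Nat := (p.count true, p.count false)

/-- The path stays weakly below the diagonal `y = x`. -/
def BelowDiag (p : List Bool) : Prop := ∀ q ∈ pathPoints p, q.2 ≤ q.1

/-- Entry `D_m(n,k)` of Catalan's trapezoid of order `m`:
`D_m(n,k) = C(n+k,k)` for `0 ≤ k < m`, `D_m(n,k) = C(n+k,k) - C(n+k,k-m)` for
`m ≤ k ≤ n+m-1`, and `D_m(n,k) = 0` for `k > n+m-1`. -/
def catDm (m n k : Nat) : Nat :=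
  if k < m then (n + k).choose k
  else if k ≤ n + m - 1 then (n + k).choose k - (n + k).choose (k - m)
  else 0

lemma aux_choose_mono (N j : ℕ) : ∀ d, 2 * (j + d) ≤ N → N.choose j ≤ N.choose (j + d) := by
  intro d
  induction d with
  | zero => simp
  | succ d ih =>
    intro h
    refine (ih (by omega)).trans ?_
    have hlt : j + d < N / 2 := by omega
    exact Nat.choose_le_succ_of_lt_half_left hlt

lemma choose_le_choose_of_sum_le {N j k : ℕ} (hjk : j ≤ k) (h : j + k ≤ N) :
    N.choose j ≤ N.choose k := by
  rcases le_or_gt (2 * k) N with h2 | h2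
  · have := aux_choose_mono N j (k - j) (by omega)
    rwa [Nat.add_sub_cancel' hjk] at this
  · have hkN : k ≤ N := by omega
    rw [← Nat.choose_symm hkN]
    have hj : j ≤ N - k := by omega
    have := aux_choose_mono N j ((N - k) - j) (by omega)
    rwa [Nat.add_sub_cancel' hj] at this

lemma catDm_rec (m n k : ℕ) (hm : 1 ≤ m) (hk : k + 1 ≤ n + m) :
    catDm m (n+1) (k+1) = catDm m n (k+1) + catDm m (n+1) k := by
  have e1 : n + 1 + (k + 1) = n + k + 2 := by ring
  have e2 : n + (k + 1) = n + k + 1 := by ring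
  have e3 : n + 1 + k = n + k + 1 := by ring
  have e4 : n + 1 + m - 1 = n + m := by omega
  unfold catDm
  rw [e1, e2, e3, e4]
  have pascal : (n + k + 2).choose (k + 1) = (n + k + 1).choose k + (n + k + 1).choose (k + 1) :=
    Nat.choose_succ_succ (n + k + 1) k
  by_cases h1 : k + 1 < m
  · rw [if_pos h1, if_pos h1, if_pos (by omega : k < m)]
    omega
  · by_cases h2 : k + 1 = m
    · rw [if_neg h1, if_pos hk, if_neg h1, if_pos (by omega : k < m)]
      have hkm : k + 1 - m = 0 := by omega
      simp only [hkm, Nat.choose_zero_right]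
      by_cases hn : 1 ≤ n
      · rw [if_pos (by omega : k + 1 ≤ n + m - 1)]
        have hpos : 1 ≤ (n + k + 1).choose (k + 1) := Nat.choose_pos (by omega)
        omega
      · have hn0 : n = 0 := by omega
        rw [if_neg (by omega : ¬ (k + 1 ≤ n + m - 1))]
        subst hn0
        have hself : (0 + k + 1).choose (k + 1) = 1 := by
          simpa using Nat.choose_self (k + 1)
        omega
    · -- k ≥ m
      have hkm : m ≤ k := by omega
      rw [if_neg h1, if_pos hk, if_neg h1, if_neg (by omega : ¬ k < m),
        if_pos (by omega : k ≤ n + m)]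
      have e5 : k + 1 - m = (k - m) + 1 := by omega
      rw [e5]
      have pascal2 : (n + k + 2).choose (k - m + 1)
          = (n + k + 1).choose (k - m) + (n + k + 1).choose (k - m + 1) :=
        Nat.choose_succ_succ (n + k + 1) (k - m)
      have hCA : (n + k + 1).choose (k - m) ≤ (n + k + 1).choose k :=
        choose_le_choose_of_sum_le (by omega) (by omega)
      by_cases h3 : k + 1 ≤ n + m - 1
      · rw [if_pos h3]
        have hDB : (n + k + 1).choose (k - m + 1) ≤ (n + k + 1).choose (k + 1) :=
          choose_le_choose_of_sum_le (by omega) (by omega)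
        omega
      · rw [if_neg h3]
        -- here k + 1 = n + m, so choose (n+k+1) (k+1) = choose (n+k+1) (k-m+1) by symmetry
        have hknm : k + 1 = n + m := by omega
        have hsym : (n + k + 1).choose (k - m + 1) = (n + k + 1).choose (k + 1) := by
          have h1' : k + 1 ≤ n + k + 1 := by omega
          have : n + k + 1 - (k + 1) = k - m + 1 := by omega
          rw [← this, Nat.choose_symm h1']
        omega

lemma scanl_concat {α β : Type*} (f : α → β → α) (l : List β) (b : β) :
    ∀ a, List.scanl f a (l ++ [b]) = List.scanl f a l ++ [f (List.foldl f a l) b] := by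
  induction l with
  | nil => intro a; simp [List.scanl]
  | cons c l ih => intro a; simp [List.scanl_cons, ih (f a c)]

lemma foldl_step (p : List Bool) :
    ∀ a b : ℕ, p.foldl (fun q s => if s then (q.1 + 1, q.2) else (q.1, q.2 + 1)) (a, b)
      = (a + p.count true, b + p.count false) := by
  induction p with
  | nil => intro a b; simp
  | cons s t ih =>
    intro a b
    cases s <;> simp [List.count_cons, ih] <;> omega

lemma count_true_add_count_false (p : List Bool) : p.count true + p.count false = p.length := by
  induction p with
  | nil => simp
  | cons s t ih => cases s <;> simp [List.count_cons] <;> omega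

lemma pathPoints_concat (p : List Bool) (s : Bool) :
    pathPoints (p ++ [s]) = pathPoints p ++
      [if s then ((pathEnd p).1 + 1, (pathEnd p).2) else ((pathEnd p).1, (pathEnd p).2 + 1)] := by
  unfold pathPoints
  rw [scanl_concat]
  congr 2
  rw [foldl_step]
  simp [pathEnd]

lemma pathEnd_concat (p : List Bool) (s : Bool) :
    pathEnd (p ++ [s]) =
      if s then ((pathEnd p).1 + 1, (pathEnd p).2) else ((pathEnd p).1, (pathEnd p).2 + 1) := by
  cases s <;> simp [pathEnd, List.count_append]

lemma pathEnd_mem_pathPoints (p : List Bool) : pathEnd p ∈ pathPoints p := by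
  induction p using List.reverseRecOn with
  | nil => simp [pathPoints, pathEnd, List.scanl]
  | append_singleton l s ih =>
    rw [pathPoints_concat, pathEnd_concat]
    simp

lemma snd_le_count (p : List Bool) : ∀ q ∈ pathPoints p, q.2 ≤ p.count false := by
  induction p using List.reverseRecOn with
  | nil => simp [pathPoints, List.scanl]
  | append_singleton l s ih =>
    intro q hq
    rw [pathPoints_concat] at hq
    rcases List.mem_append.1 hq with h | h
    · have := ih q h
      have : (l.count false) ≤ (l ++ [s]).count false := by
        simp [List.count_append]
      omega
    · simp at h
      subst h
      cases s <;> simp [List.count_append, pathEnd]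

lemma finite_paths (n k : ℕ) (P : Nat × Nat → Prop) :
    {p : List Bool | pathEnd p = (n, k) ∧ ∀ q ∈ pathPoints p, P q}.Finite := by
  apply Set.Finite.subset (List.finite_length_eq Bool (n + k))
  intro p hp
  have h1 := hp.1
  have h2 := count_true_add_count_false p
  simp only [pathEnd, Prod.mk.injEq] at h1
  simp only [Set.mem_setOf_eq]
  omega

lemma key (m : ℕ) (hm : 1 ≤ m) (N : ℕ) : ∀ n k, n + k = N →
    Set.ncard {p : List Bool |
        pathEnd p = (n, k) ∧ ∀ q ∈ pathPoints p, q.2 ≤ q.1 + m - 1} = catDm m n k := by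
  induction N with
  | zero =>
    intro n k hN
    have hn : n = 0 := by omega
    have hk : k = 0 := by omega
    subst hn; subst hk
    have hset : {p : List Bool |
        pathEnd p = (0, 0) ∧ ∀ q ∈ pathPoints p, q.2 ≤ q.1 + m - 1} = {([] : List Bool)} := by
      ext p
      simp only [Set.mem_setOf_eq, Set.mem_singleton_iff]
      constructor
      · rintro ⟨h1, _⟩
        simp only [pathEnd, Prod.mk.injEq] at h1
        have := count_true_add_count_false p
        have : p.length = 0 := by omega
        exact List.length_eq_zero_iff.1 this
      · rintro rfl
        refine ⟨rfl, ?_⟩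
        intro q hq
        simp [pathPoints, List.scanl] at hq
        subst hq
        simp
    rw [hset, Set.ncard_singleton]
    simp [catDm, Nat.lt_of_lt_of_le Nat.zero_lt_one hm]
  | succ N ih =>
    intro n k hN
    by_cases hbig : n + m ≤ k
    · -- set is empty
      have hset : {p : List Bool |
          pathEnd p = (n, k) ∧ ∀ q ∈ pathPoints p, q.2 ≤ q.1 + m - 1} = ∅ := by
        ext p
        simp only [Set.mem_setOf_eq, Set.mem_empty_iff_false, iff_false, not_and]
        intro h1 h2
        have := h2 (pathEnd p) (pathEnd_mem_pathPoints p)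
        rw [h1] at this
        simp at this
        omega
      rw [hset, Set.ncard_empty]
      unfold catDm
      rw [if_neg (by omega), if_neg (by omega)]
    · push_neg at hbig
      rcases Nat.eq_zero_or_pos k with hk0 | hkpos
      · subst hk0
        -- unique path: replicate n true
        have hset : {p : List Bool |
            pathEnd p = (n, 0) ∧ ∀ q ∈ pathPoints p, q.2 ≤ q.1 + m - 1} =
            {List.replicate n true} := by
          ext p
          simp only [Set.mem_setOf_eq, Set.mem_singleton_iff]
          constructor
          · rintro ⟨h1, _⟩
            simp only [pathEnd, Prod.mk.injEq] at h1
            have hlen := count_true_add_count_false p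
            have hall : ∀ b ∈ p, b = true := by
              intro b hb
              cases b
              · exfalso
                have : 0 < p.count false := List.count_pos_iff.2 hb
                omega
              · rfl
            have := List.eq_replicate_length.2 hall
            rwa [show p.length = n by omega] at this
          · rintro rfl
            constructor
            · simp [pathEnd, List.count_replicate]
            · intro q hq
              have := snd_le_count (List.replicate n true) q hq
              simp [List.count_replicate] at this
              omega
        rw [hset, Set.ncard_singleton]
        simp [catDm, Nat.lt_of_lt_of_le Nat.zero_lt_one hm]
      rcases Nat.eq_zero_or_pos n with hn0 | hnpos
      · subst hn0
        -- unique path: replicate k false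
        have hset : {p : List Bool |
            pathEnd p = (0, k) ∧ ∀ q ∈ pathPoints p, q.2 ≤ q.1 + m - 1} =
            {List.replicate k false} := by
          ext p
          simp only [Set.mem_setOf_eq, Set.mem_singleton_iff]
          constructor
          · rintro ⟨h1, _⟩
            simp only [pathEnd, Prod.mk.injEq] at h1
            have hlen := count_true_add_count_false p
            have hall : ∀ b ∈ p, b = false := by
              intro b hb
              cases b
              · rfl
              · exfalso
                have : 0 < p.count true := List.count_pos_iff.2 hb
                omega
            have := List.eq_replicate_length.2 hall
            rwa [show p.length = k by omega] at this
          · rintro rfl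
            constructor
            · simp [pathEnd, List.count_replicate]
            · intro q hq
              have := snd_le_count (List.replicate k false) q hq
              simp [List.count_replicate] at this
              omega
        rw [hset, Set.ncard_singleton]
        have hklm : k < m := by omega
        simp [catDm, hklm]
      · -- n ≥ 1, k ≥ 1 : decomposition by last step
        obtain ⟨n₁, rfl⟩ : ∃ n₁, n = n₁ + 1 := ⟨n - 1, by omega⟩
        obtain ⟨k₁, rfl⟩ : ∃ k₁, k = k₁ + 1 := ⟨k - 1, by omega⟩
        set S : Set (List Bool) := {p : List Bool |
            pathEnd p = (n₁ + 1, k₁ + 1) ∧ ∀ q ∈ pathPoints p, q.2 ≤ q.1 + m - 1} with hS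
        set S₁ : Set (List Bool) := {p : List Bool |
            pathEnd p = (n₁, k₁ + 1) ∧ ∀ q ∈ pathPoints p, q.2 ≤ q.1 + m - 1} with hS₁
        set S₂ : Set (List Bool) := {p : List Bool |
            pathEnd p = (n₁ + 1, k₁) ∧ ∀ q ∈ pathPoints p, q.2 ≤ q.1 + m - 1} with hS₂
        have hdecomp : S = (fun l => l ++ [true]) '' S₁ ∪ (fun l => l ++ [false]) '' S₂ := by
          ext p
          simp only [hS, hS₁, hS₂, Set.mem_setOf_eq, Set.mem_union, Set.mem_image]
          constructor
          · rintro ⟨h1, h2⟩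
            rcases p.eq_nil_or_concat' with rfl | ⟨l, s, rfl⟩
            · exfalso
              have h1' := congrArg Prod.snd h1
              simp [pathEnd] at h1'
            · rw [pathEnd_concat] at h1
              cases s
              · right
                refine ⟨l, ⟨?_, ?_⟩, rfl⟩
                · simp only [if_neg (Bool.false_ne_true)] at h1
                  simp only [Prod.mk.injEq] at h1 ⊢
                  have : (pathEnd l).1 = n₁ + 1 ∧ (pathEnd l).2 = k₁ := by omega
                  exact Prod.ext this.1 this.2
                · intro q hq
                  exact h2 q (by rw [pathPoints_concat]; exact List.mem_append_left _ hq)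
              · left
                refine ⟨l, ⟨?_, ?_⟩, rfl⟩
                · simp only [↓reduceIte] at h1
                  simp only [Prod.mk.injEq] at h1 ⊢
                  have : (pathEnd l).1 = n₁ ∧ (pathEnd l).2 = k₁ + 1 := by omega
                  exact Prod.ext this.1 this.2
                · intro q hq
                  exact h2 q (by rw [pathPoints_concat]; exact List.mem_append_left _ hq)
          · rintro (⟨l, ⟨h1, h2⟩, rfl⟩ | ⟨l, ⟨h1, h2⟩, rfl⟩)
            · constructor
              · rw [pathEnd_concat, h1]
                simp
              · intro q hq
                rw [pathPoints_concat] at hq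
                rcases List.mem_append.1 hq with h | h
                · exact h2 q h
                · simp only [List.mem_singleton] at h
                  subst h
                  rw [h1]
                  simp
                  omega
            · constructor
              · rw [pathEnd_concat, h1]
                simp
              · intro q hq
                rw [pathPoints_concat] at hq
                rcases List.mem_append.1 hq with h | h
                · exact h2 q h
                · simp only [List.mem_singleton] at h
                  subst h
                  rw [h1]
                  simp
                  omega
        have hinj : ∀ b : Bool, Function.Injective (fun l : List Bool => l ++ [b]) :=
          fun b => List.append_left_injective [b]
        have hdisj : Disjoint ((fun l => l ++ [true]) '' S₁) ((fun l => l ++ [false]) '' S₂) := by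
          rw [Set.disjoint_left]
          rintro p ⟨l, _, rfl⟩ ⟨l', _, h⟩
          have := congrArg List.getLast? h
          simp at this
        have hfin1 : ((fun l => l ++ [true]) '' S₁).Finite :=
          (finite_paths n₁ (k₁ + 1) _).image _
        have hfin2 : ((fun l => l ++ [false]) '' S₂).Finite :=
          (finite_paths (n₁ + 1) k₁ _).image _
        rw [hdecomp, Set.ncard_union_eq hdisj hfin1 hfin2,
          Set.ncard_image_of_injective _ (hinj true),
          Set.ncard_image_of_injective _ (hinj false),
          ih n₁ (k₁ + 1) (by omega), ih (n₁ + 1) k₁ (by omega)]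
        exact (catDm_rec m n₁ k₁ hm (by omega)).symm


theorem stmt4 (m n k : Nat) (hm : 1 ≤ m) (hk : k ≤ n + m - 1) :
    Set.ncard {p : List Bool |
        pathEnd p = (n, k) ∧ ∀ q ∈ pathPoints p, q.2 ≤ q.1 + m - 1} =
      catDm m n k := key m hm (n + k) n k rfl
end

section
/- For every n ≥ 2, the Catalan number C_{n−2} satisfies the alternating-sum identity C_{n−2} = ∑_{k=1}^{n−1} (−1)^{k+1} ∑_{(v₁,…,v_k) composition of n−1} ∏_{i=1}^{k} C_{v_i}, where the inner sum is over all compositions (ordered tuples of positive integers summing to n−1) of n−1 into k parts. -/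
open Finset

def T (n m k : ℕ) : ℤ :=
  ∑ v : Fin k → Fin n,
    if (∀ i, 0 < (v i : ℕ)) ∧ (∑ i, (v i : ℕ)) = m then ∏ i, (catalan (v i) : ℤ) else 0

lemma T_zero (n m : ℕ) : T n m 0 = if m = 0 then 1 else 0 := by
  simp [T, eq_comm]

lemma T_eq_zero_of_lt (n m k : ℕ) (h : m < k) : T n m k = 0 := by
  apply Finset.sum_eq_zero
  intro v _
  rw [if_neg]
  rintro ⟨h1, h2⟩
  have : k = ∑ _i : Fin k, 1 := by simp
  have hle : ∑ _i : Fin k, 1 ≤ ∑ i, (v i : ℕ) :=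
    Finset.sum_le_sum fun i _ => h1 i
  omega

lemma T_succ (n m k : ℕ) (hm : m < n) :
    T n m (k + 1) = ∑ a ∈ Finset.Icc 1 m, (catalan a : ℤ) * T n (m - a) k := by
  rw [T, ← (Fin.consEquiv (fun _ : Fin (k + 1) => Fin n)).sum_comp, Fintype.sum_prod_type]
  simp only [Fin.consEquiv_apply, Fin.forall_fin_succ, Fin.sum_univ_succ, Fin.prod_univ_succ,
    Fin.cons_zero, Fin.cons_succ]
  rw [Fin.sum_univ_eq_sum_range
    (fun a => ∑ w : Fin k → Fin n,
      if (0 < a ∧ ∀ i, 0 < (w i : ℕ)) ∧ a + ∑ i, (w i : ℕ) = m then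
        (catalan a : ℤ) * ∏ i, (catalan (w i) : ℤ) else 0) n]
  rw [← Finset.sum_subset (by
      intro x hx
      simp only [Finset.mem_Icc, Finset.mem_range] at *
      omega : Finset.Icc 1 m ⊆ Finset.range n)]
  · apply Finset.sum_congr rfl
    intro a ha
    simp only [Finset.mem_Icc] at ha
    rw [T, Finset.mul_sum]
    apply Finset.sum_congr rfl
    intro w _
    rw [mul_ite, mul_zero]
    congr 1
    rw [eq_iff_iff]
    constructor
    · rintro ⟨⟨_, h2⟩, h3⟩; exact ⟨h2, by omega⟩
    · rintro ⟨h2, h3⟩; exact ⟨⟨by omega, h2⟩, by omega⟩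
  · intro a _ ha
    simp only [Finset.mem_Icc, not_and_or, not_le] at ha
    apply Finset.sum_eq_zero
    intro w _
    rw [if_neg]
    rintro ⟨⟨h1, _⟩, h3⟩
    omega

lemma T_one (n m : ℕ) (h1 : 1 ≤ m) (hm : m < n) : T n m 1 = catalan m := by
  rw [T_succ n m 0 hm]
  rw [Finset.sum_eq_single m]
  · rw [T_zero]; simp
  · intro a ha hne
    simp only [Finset.mem_Icc] at ha
    rw [T_zero, if_neg (by omega), mul_zero]
  · intro h; simp only [Finset.mem_Icc] at h; omega

lemma B_eq (n : ℕ) : ∀ m, 1 ≤ m → m < n →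
    (∑ k ∈ Finset.Icc 1 m, (-1 : ℤ) ^ (k + 1) * T n m k) = catalan (m - 1) := by
  intro m
  induction m using Nat.strong_induction_on with
  | _ m ih =>
  intro hm1 hmn
  obtain ⟨m', rfl⟩ : ∃ m', m = m' + 1 := ⟨m - 1, by omega⟩
  rw [show Finset.Icc 1 (m' + 1) = Finset.Ico 1 (m' + 2) by rfl, Finset.sum_Ico_eq_sum_range]
  simp only [show m' + 2 - 1 = m' + 1 from rfl]
  rw [Finset.sum_range_succ']
  have h0 : (-1 : ℤ) ^ (1 + 0 + 1) * T n (m' + 1) (1 + 0) = catalan (m' + 1) := by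
    rw [T_one n (m' + 1) (by omega) hmn]; ring
  rw [h0]
  have hstep : ∀ k ∈ Finset.range m',
      (-1 : ℤ) ^ (1 + (k + 1) + 1) * T n (m' + 1) (1 + (k + 1)) =
      ∑ a ∈ Finset.Icc 1 (m' + 1),
        (catalan a : ℤ) * (-((-1 : ℤ) ^ (k + 1 + 1) * T n (m' + 1 - a) (k + 1))) := by
    intro k _
    rw [show 1 + (k + 1) = (k + 1) + 1 by ring, T_succ n (m' + 1) (k + 1) hmn, Finset.mul_sum]
    apply Finset.sum_congr rfl
    intro a _
    ring
  rw [Finset.sum_congr rfl hstep, Finset.sum_comm]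
  have hinner : ∀ a ∈ Finset.Icc 1 (m' + 1),
      (∑ k ∈ Finset.range m',
        (catalan a : ℤ) * (-((-1 : ℤ) ^ (k + 1 + 1) * T n (m' + 1 - a) (k + 1)))) =
      -((catalan a : ℤ) * (if a = m' + 1 then 0 else catalan (m' - a))) := by
    intro a ha
    simp only [Finset.mem_Icc] at ha
    rw [← Finset.mul_sum, Finset.sum_neg_distrib, mul_neg]
    congr 1
    congr 1
    by_cases hcase : a = m' + 1
    · subst hcase
      rw [if_pos rfl, Nat.cast_zero]
      apply Finset.sum_eq_zero
      intro k _
      rw [show m' + 1 - (m' + 1) = 0 by omega, T_eq_zero_of_lt n 0 (k + 1) (by omega), mul_zero]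
    · rw [if_neg hcase]
      set m₂ := m' + 1 - a with hm₂
      have hm₂1 : 1 ≤ m₂ := by omega
      have hm₂2 : m₂ ≤ m' := by omega
      have key := ih m₂ (by omega) hm₂1 (by omega)
      rw [show m₂ - 1 = m' - a by omega] at key
      rw [← key]
      rw [show Finset.Icc 1 m₂ = Finset.Ico 1 (m₂ + 1) by rfl, Finset.sum_Ico_eq_sum_range]
      simp only [show m₂ + 1 - 1 = m₂ from rfl]
      rw [← Finset.sum_subset (Finset.range_subset_range.2 hm₂2)]
      apply Finset.sum_congr rfl
      · intro k _
        rw [show 1 + k = k + 1 by ring]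
      · intro k _ hk
        simp only [Finset.mem_range, not_lt] at hk
        rw [T_eq_zero_of_lt n m₂ (k + 1) (by omega), mul_zero]
  rw [Finset.sum_congr rfl hinner]
  have hA : ∑ a ∈ Finset.Icc 1 (m' + 1),
      -((catalan a : ℤ) * (if a = m' + 1 then 0 else catalan (m' - a))) =
      -(∑ a ∈ Finset.Icc 1 m', (catalan a : ℤ) * catalan (m' - a)) := by
    rw [Finset.sum_neg_distrib]
    congr 1
    rw [← Finset.sum_subset (show Finset.Icc 1 m' ⊆ Finset.Icc 1 (m' + 1) from
        Finset.Icc_subset_Icc_right (by omega))]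
    · apply Finset.sum_congr rfl
      intro a ha
      simp only [Finset.mem_Icc] at ha
      rw [if_neg (by omega)]
    · intro a ha hna
      simp only [Finset.mem_Icc] at ha hna
      rw [if_pos (by omega)]
      simp
  have hcat : (catalan (m' + 1) : ℤ) =
      (∑ a ∈ Finset.Icc 1 m', (catalan a : ℤ) * catalan (m' - a)) + catalan m' := by
    rw [catalan_succ]
    push_cast
    rw [Fin.sum_univ_eq_sum_range (fun a => ((catalan a : ℤ) * catalan (m' - a))) (m' + 1)]
    rw [Finset.sum_range_succ']
    congr 1
    · rw [show Finset.Icc 1 m' = Finset.Ico 1 (m' + 1) by rfl, Finset.sum_Ico_eq_sum_range]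
      simp only [show m' + 1 - 1 = m' from rfl]
      apply Finset.sum_congr rfl
      intro k _
      rw [show 1 + k = k + 1 by ring]
    · simp
  rw [hA]
  simp only [show m' + 1 - 1 = m' from rfl]
  linarith

theorem stmt9 (n : Nat) (hn : 2 ≤ n) :
    (catalan (n - 2) : ℤ) =
      ∑ k ∈ Finset.Icc 1 (n - 1), (-1 : ℤ) ^ (k + 1) *
        ∑ v : Fin k → Fin n,
          if (∀ i, 0 < (v i : Nat)) ∧ (∑ i, (v i : Nat)) = n - 1 then
            ∏ i, (catalan (v i) : ℤ)
          else 0 := by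
  have := B_eq n (n - 1) (by omega) (by omega)
  rw [show n - 1 - 1 = n - 2 by omega] at this
  rw [← this]
  rfl
end

section
/- The number of Dyck paths of semi-length n up to reversal (i.e., the number of equivalence classes under the reversal involution) equals (1/2)·(C_n + binomial(n, ⌊n/2⌋)), where C_n is the n-th Catalan number. -/
/-- A Dyck word: `true` = up-step `U`, `false` = down-step `D`; every prefix has at
least as many up-steps as down-steps. -/
def IsDyckWord (l : List Bool) : Prop :=
  ∀ k, (l.take k).count false ≤ (l.take k).count true

/-- A Dyck path of semi-length `n`. -/
def IsDyckPath (n : Nat) (l : List Bool) : Prop :=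
  l.length = 2 * n ∧ l.count true = n ∧ IsDyckWord l

/-- Reversal of a Dyck path: reverse the step sequence and swap `U` and `D`. -/
def dyckRev (l : List Bool) : List Bool := l.reverse.map (fun b => !b)

namespace Stmt12Aux

open List DyckStep

/-! ### Basic list count lemmas -/

lemma count_take_add_count_drop (l : List Bool) (k : ℕ) (b : Bool) :
    (l.take k).count b + (l.drop k).count b = l.count b := by
  rw [← List.count_append, List.take_append_drop]

lemma count_true_add_count_false (l : List Bool) :
    l.count true + l.count false = l.length := by
  induction l with
  | nil => rfl
  | cons b t ih => cases b <;> simp [List.count_cons] <;> omega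

lemma count_map_not (l : List Bool) (b : Bool) : (l.map not).count b = l.count (!b) := by
  simpa using List.count_map_of_injective l not (fun a b h => by simpa using h) (!b)

@[simp] lemma length_dyckRev (l : List Bool) : (dyckRev l).length = l.length := by
  simp [dyckRev]

lemma count_dyckRev (l : List Bool) (b : Bool) : (dyckRev l).count b = l.count (!b) := by
  rw [dyckRev]
  rw [count_map_not, List.count_reverse]

@[simp] lemma dyckRev_dyckRev (l : List Bool) : dyckRev (dyckRev l) = l := by
  simp only [dyckRev, List.map_reverse, List.reverse_reverse, List.map_map]
  have : ((fun b => !b) ∘ fun b : Bool => !b) = id := by funext b; simp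
  rw [this, List.map_id]

lemma dyckRev_append (a b : List Bool) :
    dyckRev (a ++ b) = dyckRev b ++ dyckRev a := by
  simp [dyckRev]

lemma take_dyckRev (l : List Bool) (k : ℕ) :
    (dyckRev l).take k = dyckRev (l.drop (l.length - k)) := by
  rw [dyckRev, dyckRev, ← List.map_take, List.take_reverse]

lemma drop_dyckRev (l : List Bool) (k : ℕ) :
    (dyckRev l).drop k = dyckRev (l.take (l.length - k)) := by
  rw [dyckRev, dyckRev, ← List.map_drop, List.drop_reverse]

/-! ### Decidability -/

lemma isDyckWord_iff_le (l : List Bool) :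
    IsDyckWord l ↔ ∀ k ≤ l.length, (l.take k).count false ≤ (l.take k).count true := by
  constructor
  · intro h k _; exact h k
  · intro h k
    rcases le_or_gt k l.length with hk | hk
    · exact h k hk
    · rw [List.take_of_length_le hk.le]
      simpa using h l.length le_rfl

lemma isDyckWord_count (l : List Bool) (h : IsDyckWord l) :
    l.count false ≤ l.count true := by
  simpa using h l.length

instance : DecidablePred IsDyckWord := fun l =>
  decidable_of_iff _ (isDyckWord_iff_le l).symm

instance (n : ℕ) : DecidablePred (IsDyckPath n) := fun l => by
  unfold IsDyckPath; infer_instance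

/-! ### Finsets of words -/

/-- All lists of booleans of length `n`. -/
def listsLen : ℕ → Finset (List Bool)
  | 0 => {[]}
  | n+1 => ((listsLen n).image (· ++ [true])) ∪ ((listsLen n).image (· ++ [false]))

lemma mem_listsLen : ∀ (n : ℕ) (l : List Bool), l ∈ listsLen n ↔ l.length = n
  | 0, l => by simp [listsLen, List.length_eq_zero_iff]
  | n+1, l => by
    simp only [listsLen, Finset.mem_union, Finset.mem_image]
    constructor
    · rintro (⟨m, hm, rfl⟩ | ⟨m, hm, rfl⟩) <;>
        simp [(mem_listsLen n m).mp hm]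
    · intro hl
      have hne : l ≠ [] := by rintro rfl; simp at hl
      have h2 : l.dropLast ++ [l.getLast hne] = l := List.dropLast_concat_getLast hne
      have hd : l.dropLast ∈ listsLen n := (mem_listsLen n _).mpr
        (by rw [List.length_dropLast, hl]; rfl)
      cases hb : l.getLast hne
      · right; exact ⟨l.dropLast, hd, by rw [← hb, h2]⟩
      · left; exact ⟨l.dropLast, hd, by rw [← hb, h2]⟩

/-- Nonnegative prefixes of length `n`. -/
def Hs (n : ℕ) : Finset (List Bool) := (listsLen n).filter IsDyckWord

/-- Dyck paths of semilength `n`. -/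
def Dck (n : ℕ) : Finset (List Bool) := (listsLen (2*n)).filter (IsDyckPath n)

/-- Balanced nonnegative words of length `n`. -/
def Zs (n : ℕ) : Finset (List Bool) :=
  (Hs n).filter (fun w => w.count false = w.count true)

/-- Reversal-invariant Dyck paths of semilength `n`. -/
def Fx (n : ℕ) : Finset (List Bool) := (Dck n).filter (fun l => dyckRev l = l)

lemma mem_Hs {n : ℕ} {l : List Bool} : l ∈ Hs n ↔ l.length = n ∧ IsDyckWord l := by
  simp [Hs, mem_listsLen]

lemma mem_Dck {n : ℕ} {l : List Bool} : l ∈ Dck n ↔ IsDyckPath n l := by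
  simp only [Dck, Finset.mem_filter, mem_listsLen, and_iff_right_iff_imp]
  exact fun h => h.1

lemma mem_Zs {n : ℕ} {l : List Bool} :
    l ∈ Zs n ↔ l.length = n ∧ IsDyckWord l ∧ l.count false = l.count true := by
  simp [Zs, mem_Hs, and_assoc]

lemma mem_Fx {n : ℕ} {l : List Bool} :
    l ∈ Fx n ↔ IsDyckPath n l ∧ dyckRev l = l := by
  simp [Fx, mem_Dck]

/-! ### Dyck paths are counted by Catalan numbers -/

/-- From `Bool` to `DyckStep`. -/
def bs : Bool → DyckStep := fun b => bif b then U else D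

/-- From `DyckStep` to `Bool`. -/
def sb : DyckStep → Bool := fun s => match s with | U => true | D => false

lemma bs_inj : Function.Injective bs := by
  intro a b h; cases a <;> cases b <;> simp [bs] at h ⊢

lemma sb_inj : Function.Injective sb := by
  intro a b h; cases a <;> cases b <;> simp [sb] at h ⊢

lemma count_bs (l : List Bool) (b : Bool) : (l.map bs).count (bs b) = l.count b :=
  List.count_map_of_injective l bs bs_inj b

lemma count_sb (l : List DyckStep) (s : DyckStep) : (l.map sb).count (sb s) = l.count s :=
  List.count_map_of_injective l sb sb_inj s

/-- The equivalence between Dyck paths (as bool lists) and Mathlib's `DyckWord`s. -/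
noncomputable def dckEquiv (n : ℕ) :
    {l : List Bool // l ∈ Dck n} ≃ {p : DyckWord // p.semilength = n} where
  toFun l :=
    ⟨⟨l.1.map bs, by
        have h := mem_Dck.mp l.2
        have cf : (l : List Bool).count false = n := by
          have := count_true_add_count_false l.1
          have h1 := h.1; have h2 := h.2.1; omega
        show (l.1.map bs).count (bs true) = (l.1.map bs).count (bs false)
        rw [count_bs, count_bs, h.2.1, cf], by
        intro i
        have h := mem_Dck.mp l.2
        show ((l.1.map bs).take i).count (bs false) ≤ ((l.1.map bs).take i).count (bs true)
        rw [← List.map_take, count_bs, count_bs]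
        exact h.2.2 i⟩, by
      have h := mem_Dck.mp l.2
      show (l.1.map bs).count (bs true) = n
      rw [count_bs, h.2.1]⟩
  invFun p :=
    ⟨p.1.toList.map sb, mem_Dck.mpr
      ⟨by rw [List.length_map, ← p.1.two_mul_semilength_eq_length, p.2], by
        show (p.1.toList.map sb).count (sb U) = n
        rw [count_sb]; exact p.2, by
        intro k
        show ((p.1.toList.map sb).take k).count (sb D) ≤ ((p.1.toList.map sb).take k).count (sb U)
        rw [← List.map_take, count_sb, count_sb]
        exact p.1.count_D_le_count_U k⟩⟩
  left_inv l := by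
    ext1
    show (l.1.map bs).map sb = l.1
    rw [List.map_map]
    have : sb ∘ bs = id := by funext b; cases b <;> rfl
    rw [this, List.map_id]
  right_inv p := by
    ext1; ext1
    show (p.1.toList.map sb).map bs = p.1.toList
    rw [List.map_map]
    have : bs ∘ sb = id := by funext s; cases s <;> rfl
    rw [this, List.map_id]

lemma card_Dck (n : ℕ) : (Dck n).card = catalan n := by
  rw [← Fintype.card_coe]
  rw [Fintype.card_congr (dckEquiv n)]
  exact DyckWord.card_dyckWord_semilength_eq_catalan n

/-! ### The recurrence for `Hs` -/

lemma isDyckWord_append_singleton (w : List Bool) (b : Bool) :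
    IsDyckWord (w ++ [b]) ↔
      IsDyckWord w ∧ (b = true ∨ w.count false < w.count true) := by
  constructor
  · intro h
    constructor
    · intro k
      rcases le_or_gt k w.length with hk | hk
      · have := h k
        rwa [List.take_append_of_le_length hk] at this
      · rw [List.take_of_length_le hk.le]
        have := h w.length
        rwa [List.take_append_of_le_length le_rfl, List.take_length] at this
    · cases b
      · right
        have := h (w.length + 1)
        rw [List.take_of_length_le (by simp)] at this
        simp [List.count_append] at this
        omega
      · left; rfl
  · rintro ⟨hw, hb⟩ k
    rcases le_or_gt k w.length with hk | hk
    · rw [List.take_append_of_le_length hk]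
      exact hw k
    · rw [List.take_of_length_le (by simp; omega)]
      have hfull := isDyckWord_count w hw
      rcases hb with rfl | hlt
      · simp [List.count_append]; omega
      · cases b <;> simp [List.count_append] <;> omega

lemma Hs_succ (n : ℕ) :
    Hs (n+1) = ((Hs n).image (· ++ [true])) ∪
      (((Hs n).filter (fun w => w.count false < w.count true)).image (· ++ [false])) := by
  ext l
  simp only [mem_Hs, Finset.mem_union, Finset.mem_image, Finset.mem_filter]
  constructor
  · rintro ⟨hl, hw⟩
    have hne : l ≠ [] := by rintro rfl; simp at hl
    have h2 : l.dropLast ++ [l.getLast hne] = l := List.dropLast_concat_getLast hne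
    have hlen : l.dropLast.length = n := by rw [List.length_dropLast, hl]; rfl
    rw [← h2] at hw
    rw [isDyckWord_append_singleton] at hw
    cases hb : l.getLast hne
    · right
      refine ⟨l.dropLast, ⟨⟨hlen, hw.1⟩, ?_⟩, by rw [← hb, h2]⟩
      rcases hw.2 with h | h
      · rw [hb] at h; exact absurd h (by simp)
      · exact h
    · left
      exact ⟨l.dropLast, ⟨hlen, hw.1⟩, by rw [← hb, h2]⟩
  · rintro (⟨w, ⟨hlen, hw⟩, rfl⟩ | ⟨w, ⟨⟨hlen, hw⟩, hlt⟩, rfl⟩)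
    · exact ⟨by simp [hlen], (isDyckWord_append_singleton w true).mpr ⟨hw, Or.inl rfl⟩⟩
    · exact ⟨by simp [hlen], (isDyckWord_append_singleton w false).mpr ⟨hw, Or.inr hlt⟩⟩

lemma card_Hs_succ (n : ℕ) :
    (Hs (n+1)).card + (Zs n).card = 2 * (Hs n).card := by
  rw [Hs_succ]
  have hinj1 : Set.InjOn (· ++ [true]) (Hs n) := fun a _ b _ h => by
    simpa using h
  have hinj2 : Set.InjOn (· ++ [false]) ↑((Hs n).filter (fun w => w.count false < w.count true)) :=
    fun a _ b _ h => by simpa using h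
  have hdisj : Disjoint ((Hs n).image (· ++ [true]))
      (((Hs n).filter (fun w => w.count false < w.count true)).image (· ++ [false])) := by
    rw [Finset.disjoint_left]
    rintro a ha hb
    simp only [Finset.mem_image] at ha hb
    obtain ⟨w₁, -, h₁⟩ := ha
    obtain ⟨w₂, -, h₂⟩ := hb
    rw [← h₂] at h₁
    have := (List.append_inj' h₁ rfl).2
    simp at this
  rw [Finset.card_union_of_disjoint hdisj, Finset.card_image_of_injOn hinj1,
    Finset.card_image_of_injOn hinj2]
  have hsplit : ((Hs n).filter (fun w => w.count false < w.count true)).card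
      + (Zs n).card = (Hs n).card := by
    rw [Zs]
    have : (Hs n).filter (fun w => w.count false = w.count true)
        = (Hs n).filter (fun w => ¬ (w.count false < w.count true)) := by
      apply Finset.filter_congr
      intro w hw
      have := isDyckWord_count w (mem_Hs.mp hw).2
      simp only [eq_iff_iff, not_lt]
      omega
    rw [this]
    exact Finset.card_filter_add_card_filter_not _
  omega

/-! ### `Zs` cards -/

lemma Zs_even (m : ℕ) : Zs (2*m) = Dck m := by
  ext l
  simp only [mem_Zs, mem_Dck, IsDyckPath]
  have := count_true_add_count_false l
  constructor
  · rintro ⟨h1, h2, h3⟩; exact ⟨h1, by omega, h2⟩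
  · rintro ⟨h1, h2, h3⟩; exact ⟨h1, h3, by omega⟩

lemma Zs_odd (m : ℕ) : Zs (2*m+1) = ∅ := by
  ext l
  simp only [mem_Zs, Finset.notMem_empty, iff_false, not_and]
  intro h1 _ h3
  have := count_true_add_count_false l
  omega

/-! ### Binomial identities -/

lemma binom_even (m : ℕ) : (2*m+1).choose m + catalan m = 2 * ((2*m).choose m) := by
  rcases m with - | k
  · simp
  set a := (2*(k+1)).choose k with ha
  set b := (2*(k+1)).choose (k+1) with hb
  set c := catalan (k+1) with hc
  have h1 : (2*(k+1)+1).choose (k+1) = a + b := by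
    rw [show 2*(k+1)+1 = (2*(k+1)) + 1 by ring, Nat.choose_succ_succ']
  have h2 : (k+2) * a = (k+1) * b := by
    have h := Nat.choose_succ_right_eq (2*(k+1)) k
    rw [← ha, ← hb, show 2*(k+1) - k = k + 2 by omega] at h
    rw [Nat.mul_comm (k+2) a, Nat.mul_comm (k+1) b]
    exact h.symm
  have h3 : (k+2) * c = b := by
    have h := succ_mul_catalan_eq_centralBinom (k+1)
    rwa [Nat.centralBinom_eq_two_mul_choose, ← hb, ← hc] at h
  have h4 : (k+2) * (a + c) = (k+2) * b := by
    rw [Nat.mul_add, h2, h3]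
    ring
  have h5 : a + c = b := Nat.eq_of_mul_eq_mul_left (by omega) h4
  rw [h1]
  omega

lemma binom_odd (m : ℕ) : (2*(m+1)).choose (m+1) = 2 * ((2*m+1).choose m) := by
  have h1 : (2*(m+1)).choose (m+1) = (2*m+1).choose m + (2*m+1).choose (m+1) := by
    rw [show 2*(m+1) = (2*m+1) + 1 by ring]
    exact Nat.choose_succ_succ _ _
  rw [h1, Nat.choose_symm_half]
  omega

/-! ### Counting `Hs` -/

lemma card_Hs : ∀ n : ℕ, (Hs n).card = n.choose (n / 2)
  | 0 => by
    have : Hs 0 = {[]} := by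
      ext l; simp [mem_Hs, List.length_eq_zero_iff, IsDyckWord]
      rintro rfl; intro k; simp
    rw [this]; rfl
  | (n+1) => by
    have hrec := card_Hs_succ n
    rw [card_Hs n] at hrec
    rcases Nat.even_or_odd n with ⟨m, hm⟩ | ⟨m, hm⟩
    · subst hm
      rw [show m + m = 2*m by ring] at hrec ⊢
      rw [Zs_even, card_Dck] at hrec
      have hb := binom_even m
      have hd1 : (2*m)/2 = m := by omega
      have hd2 : (2*m+1)/2 = m := by omega
      rw [hd1] at hrec
      rw [hd2]
      omega
    · subst hm
      rw [show 2*m+1+1 = 2*m+2 by ring] at hrec ⊢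
      rw [Zs_odd, Finset.card_empty] at hrec
      have hb := binom_odd m
      rw [show 2*(m+1) = 2*m+2 by ring] at hb
      have hd1 : (2*m+1)/2 = m := by omega
      have hd2 : (2*m+2)/2 = m+1 := by omega
      rw [hd1] at hrec
      rw [hd2]
      omega

/-! ### Fixed points of reversal -/

lemma isDyckWord_take {l : List Bool} (h : IsDyckWord l) (n : ℕ) :
    IsDyckWord (l.take n) := by
  intro k
  rw [List.take_take]
  exact h _

lemma fix_decomp {n : ℕ} {l : List Bool} (hlen : l.length = 2*n) (hfix : dyckRev l = l) :
    l = l.take n ++ dyckRev (l.take n) := by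
  have : dyckRev (l.take n) = l.drop n := by
    rw [dyckRev, List.reverse_take, hlen, show 2*n - n = n by omega,
      List.map_drop, ← dyckRev]
    rw [hfix]
  rw [this, List.take_append_drop]

lemma card_Fx (n : ℕ) : (Fx n).card = (Hs n).card := by
  apply Finset.card_bij (fun l _ => l.take n)
  · intro l hl
    obtain ⟨⟨hlen, hct, hw⟩, hfix⟩ := mem_Fx.mp hl
    exact mem_Hs.mpr ⟨by rw [List.length_take, hlen]; omega, isDyckWord_take hw n⟩
  · intro l₁ h₁ l₂ h₂ he
    obtain ⟨⟨hlen₁, -, -⟩, hfix₁⟩ := mem_Fx.mp h₁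
    obtain ⟨⟨hlen₂, -, -⟩, hfix₂⟩ := mem_Fx.mp h₂
    rw [fix_decomp hlen₁ hfix₁, fix_decomp hlen₂ hfix₂, he]
  · intro w hw
    obtain ⟨hlen, hword⟩ := mem_Hs.mp hw
    refine ⟨w ++ dyckRev w, ?_, ?_⟩
    swap
    · rw [List.take_append_of_le_length (by omega), List.take_of_length_le (by omega)]
    have hcc := count_true_add_count_false w
    have hcnt : (w ++ dyckRev w).count true = n := by
      rw [List.count_append, count_dyckRev]
      simp only [Bool.not_true]
      omega
    refine mem_Fx.mpr ⟨⟨by simp [hlen]; ring, hcnt, ?_⟩, ?_⟩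
    · -- IsDyckWord (w ++ dyckRev w)
      intro k
      rcases le_or_gt k n with hk | hk
      · rw [List.take_append_of_le_length (by omega)]
        exact hword k
      · rw [List.take_append]
        rw [List.take_of_length_le (by omega)]
        set j := k - w.length with hj
        rw [take_dyckRev]
        set i := w.length - j with hi
        have hsplit_t := count_take_add_count_drop w i true
        have hsplit_f := count_take_add_count_drop w i false
        have hpre := hword i
        rw [List.count_append, List.count_append, count_dyckRev, count_dyckRev]
        simp only [Bool.not_false, Bool.not_true]
        omega
    · rw [dyckRev_append, dyckRev_dyckRev]

/-! ### Orbit counting for an involution -/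

lemma involution_orbit_count {α : Type*} [DecidableEq α] (D : Finset α) (r : α → α)
    (hmem : ∀ l ∈ D, r l ∈ D) (hinv : ∀ l, r (r l) = l) :
    2 * Set.ncard {s : Set α | ∃ l ∈ D, s = {l, r l}} =
      D.card + (D.filter (fun l => r l = l)).card := by
  classical
  set f : α → Set α := fun l => {l, r l} with hf
  have hset : {s : Set α | ∃ l ∈ D, s = {l, r l}} = ↑(D.image f) := by
    ext s
    simp only [Set.mem_setOf_eq, Finset.coe_image, Set.mem_image, Finset.mem_coe]
    constructor
    · rintro ⟨l, hl, rfl⟩; exact ⟨l, hl, rfl⟩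
    · rintro ⟨l, hl, rfl⟩; exact ⟨l, hl, rfl⟩
  rw [hset, Set.ncard_coe_finset]
  set F := D.filter (fun l => r l = l) with hF
  have hDsum : D.card = ∑ s ∈ D.image f, (D.filter (fun l => f l = s)).card :=
    Finset.card_eq_sum_card_fiberwise (fun x hx => Finset.mem_image_of_mem f hx)
  have hFsum : F.card = ∑ s ∈ D.image f, (F.filter (fun l => f l = s)).card :=
    Finset.card_eq_sum_card_fiberwise
      (fun x hx => Finset.mem_image_of_mem f (Finset.filter_subset _ _ hx))
  have key2 : ∀ s ∈ D.image f,
      (D.filter (fun l => f l = s)).card + (F.filter (fun l => f l = s)).card = 2 := by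
    intro s hs
    obtain ⟨l₀, hl₀, rfl⟩ := Finset.mem_image.mp hs
    have key : ∀ m, f m = f l₀ → m = l₀ ∨ m = r l₀ := by
      intro m hm
      have h : m ∈ f m := Set.mem_insert _ _
      rw [hm] at h
      simpa [f] using h
    by_cases hfix : r l₀ = l₀
    · have h1 : D.filter (fun l => f l = f l₀) = {l₀} := by
        ext m
        simp only [Finset.mem_filter, Finset.mem_singleton]
        constructor
        · rintro ⟨hm, he⟩
          rcases key m he with rfl | rfl
          · rfl
          · exact hfix
        · rintro rfl; exact ⟨hl₀, rfl⟩
      have h2 : F.filter (fun l => f l = f l₀) = {l₀} := by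
        ext m
        simp only [hF, Finset.mem_filter, Finset.mem_singleton]
        constructor
        · rintro ⟨⟨hm, -⟩, he⟩
          rcases key m he with rfl | rfl
          · rfl
          · exact hfix
        · rintro rfl; exact ⟨⟨hl₀, hfix⟩, rfl⟩
      rw [h1, h2]; rfl
    · have h1 : D.filter (fun l => f l = f l₀) = {l₀, r l₀} := by
        ext m
        simp only [Finset.mem_filter, Finset.mem_insert, Finset.mem_singleton]
        constructor
        · rintro ⟨hm, he⟩; exact key m he
        · rintro (rfl | rfl)
          · exact ⟨hl₀, rfl⟩
          · refine ⟨hmem _ hl₀, ?_⟩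
            show ({r l₀, r (r l₀)} : Set α) = {l₀, r l₀}
            rw [hinv, Set.pair_comm]
      have h2 : F.filter (fun l => f l = f l₀) = ∅ := by
        ext m
        simp only [hF, Finset.mem_filter, Finset.notMem_empty, iff_false, not_and, and_imp]
        intro hm hrm he
        rcases key m he with rfl | rfl
        · exact hfix hrm
        · rw [hinv] at hrm; exact hfix hrm.symm
      rw [h1, h2, Finset.card_empty, Finset.card_insert_of_notMem (by simpa using Ne.symm hfix),
        Finset.card_singleton]
  rw [hDsum, hFsum, ← Finset.sum_add_distrib, Finset.sum_congr rfl key2,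
    Finset.sum_const, smul_eq_mul, mul_comm]

/-! ### Reversal preserves Dyck paths -/

lemma isDyckPath_dyckRev {n : ℕ} {l : List Bool} (h : IsDyckPath n l) :
    IsDyckPath n (dyckRev l) := by
  obtain ⟨hlen, hct, hw⟩ := h
  have hcc := count_true_add_count_false l
  have hcf : l.count false = n := by omega
  refine ⟨by simp [hlen], by rw [count_dyckRev]; simpa using hcf, ?_⟩
  intro k
  rcases le_or_gt k l.length with hk | hk
  · rw [take_dyckRev]
    set i := l.length - k with hi
    have hsplit_t := count_take_add_count_drop l i true
    have hsplit_f := count_take_add_count_drop l i false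
    have hpre := hw i
    rw [count_dyckRev, count_dyckRev]
    simp only [Bool.not_false, Bool.not_true]
    omega
  · rw [List.take_of_length_le (by simpa using hk.le)]
    rw [count_dyckRev, count_dyckRev]
    simp only [Bool.not_false, Bool.not_true]
    omega

end Stmt12Aux

open Stmt12Aux in
theorem stmt12 (n : Nat) :
    2 * Set.ncard {s : Set (List Bool) | ∃ l, IsDyckPath n l ∧ s = {l, dyckRev l}} =
      catalan n + n.choose (n / 2) := by
  classical
  have hset : {s : Set (List Bool) | ∃ l, IsDyckPath n l ∧ s = {l, dyckRev l}}
      = {s : Set (List Bool) | ∃ l ∈ Dck n, s = {l, dyckRev l}} := by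
    ext s
    simp only [Set.mem_setOf_eq, mem_Dck]
  rw [hset]
  rw [involution_orbit_count (Dck n) dyckRev
    (fun l hl => mem_Dck.mpr (isDyckPath_dyckRev (mem_Dck.mp hl)))
    dyckRev_dyckRev]
  rw [card_Dck]
  congr 1
  show (Fx n).card = _
  rw [card_Fx, card_Hs]
end

section
/- Let n ≥ 2. Call a subset B of {(i,j) : 1 ≤ j ≤ i ≤ n−2} 'caterpillar-friendly' if whenever (i,j) ∈ B, then (k,j) ∈ B for all j ≤ k ≤ i and (i,ℓ) ∈ B for all j ≤ ℓ ≤ i. The number of caterpillar-friendly subsets equals the Catalan number C_{n−1}. -/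
def MSeq15 (s : ℕ) : Set (ℕ → ℕ) :=
  {f | Monotone f ∧ (∀ i, f i ≤ i - 1) ∧ ∀ i, s ≤ i → f i = f s}

instance mseq15_finite (s : ℕ) : Finite (MSeq15 s) := by
  apply Finite.of_injective (β := Fin (s+1) → Fin (s+1))
    (fun f i => ⟨f.1 i, by have := f.2.2.1 (i : ℕ); have := i.2; omega⟩)
  rintro ⟨f, hf⟩ ⟨g, hg⟩ h
  ext i
  show f i = g i
  by_cases hi : i ≤ s
  · have := congrFun h ⟨i, by omega⟩
    simpa [Fin.ext_iff] using this
  · rw [hf.2.2 i (by omega), hg.2.2 i (by omega)]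
    have := congrFun h ⟨s, by omega⟩
    simpa [Fin.ext_iff] using this

def tOf (s : ℕ) (f : ℕ → ℕ) : ℕ := Nat.findGreatest (fun j => f j + 1 = j) (s+1)

lemma tOf_facts (s : ℕ) (f : ℕ → ℕ) (hf : f ∈ MSeq15 (s+1)) :
    1 ≤ tOf s f ∧ tOf s f ≤ s + 1 ∧ f (tOf s f) + 1 = tOf s f ∧
      ∀ j, tOf s f < j → j ≤ s + 1 → f j + 1 ≠ j := by
  obtain ⟨hm, hb, hp⟩ := hf
  have h1 : f 1 + 1 = 1 := by have := hb 1; omega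
  have ht1 : 1 ≤ tOf s f := by
    by_contra hc
    rw [tOf] at hc
    exact Nat.findGreatest_is_greatest (P := fun j => f j + 1 = j) (n := s+1) (k := 1) (by omega) (by omega) h1
  refine ⟨ht1, Nat.findGreatest_le _, ?_, ?_⟩
  · exact Nat.findGreatest_spec (P := fun j => f j + 1 = j) (m := 1) (by omega) h1
  · intro j hj hj2
    rw [tOf] at hj
    exact Nat.findGreatest_is_greatest (P := fun j => f j + 1 = j) hj hj2

def lowOf (u : ℕ) (f : ℕ → ℕ) : ℕ → ℕ := fun i => f (min i u)
def highOf (t c : ℕ) (f : ℕ → ℕ) : ℕ → ℕ := fun k => f (t + min k c) - (t - 1)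
def glue (u : ℕ) (g h : ℕ → ℕ) : ℕ → ℕ := fun i => if i ≤ u then g i else u + h (i - (u+1))

lemma low_mem {f : ℕ → ℕ} (hm : Monotone f) (hb : ∀ i, f i ≤ i - 1) (u : ℕ) :
    lowOf u f ∈ MSeq15 u := by
  refine ⟨fun a b hab => ?_, fun i => ?_, fun i hi => ?_⟩
  · simp only [lowOf]
    exact hm (by omega)
  · simp only [lowOf]
    have := hb (min i u); omega
  · simp only [lowOf]
    congr 1
    omega

lemma high_mem {s : ℕ} {f : ℕ → ℕ} (hm : Monotone f) (hb : ∀ i, f i ≤ i - 1)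
    {t : ℕ} (ht1 : 1 ≤ t) (hts : t ≤ s + 1) (htv : f t + 1 = t)
    (htmax : ∀ j, t < j → j ≤ s + 1 → f j + 1 ≠ j) :
    highOf t (s - (t - 1)) f ∈ MSeq15 (s - (t - 1)) := by
  have hc : s - (t - 1) = s + 1 - t := by omega
  refine ⟨fun a b hab => ?_, fun k => ?_, fun k hk => ?_⟩
  · simp only [highOf]
    have : f (t + min a (s - (t-1))) ≤ f (t + min b (s - (t-1))) := hm (by omega)
    omega
  · simp only [highOf]
    rcases Nat.eq_zero_or_pos (min k (s - (t-1))) with h0 | h0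
    · rw [h0, Nat.add_zero]
      omega
    · have hne := htmax (t + min k (s - (t-1))) (by omega) (by omega)
      have hbb := hb (t + min k (s - (t-1)))
      omega
  · simp only [highOf]
    congr 2
    omega

lemma glue_mem {s u : ℕ} {g h : ℕ → ℕ} (hu : u ≤ s)
    (hg : g ∈ MSeq15 u) (hh : h ∈ MSeq15 (s - u)) : glue u g h ∈ MSeq15 (s + 1) := by
  obtain ⟨gm, gb, gp⟩ := hg
  obtain ⟨hm, hb, hp⟩ := hh
  refine ⟨fun a b hab => ?_, fun i => ?_, fun i hi => ?_⟩
  · simp only [glue]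
    by_cases ha : a ≤ u <;> by_cases hbu : b ≤ u
    · simp only [if_pos ha, if_pos hbu]
      exact gm hab
    · have h1 := gb a
      simp only [if_pos ha, if_neg hbu]
      omega
    · omega
    · have : h (a - (u+1)) ≤ h (b - (u+1)) := hm (by omega)
      simp only [if_neg ha, if_neg hbu]
      omega
  · simp only [glue]
    by_cases hiu : i ≤ u
    · have := gb i; simp only [if_pos hiu]; omega
    · have := hb (i - (u+1)); simp only [if_neg hiu]; omega
  · simp only [glue, if_neg (by omega : ¬ i ≤ u), if_neg (by omega : ¬ s + 1 ≤ u)]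
    have : h (i - (u+1)) = h (s - u) := by
      rw [hp (i - (u+1)) (by omega)]
    rw [this, ← hp (s + 1 - (u+1)) (by omega)]


lemma tOf_glue {s u : ℕ} {g h : ℕ → ℕ} (hu : u ≤ s)
    (hg : g ∈ MSeq15 u) (hh : h ∈ MSeq15 (s - u)) : tOf s (glue u g h) = u + 1 := by
  have h00 : h 0 = 0 := by have := hh.2.1 0; omega
  have hPt : glue u g h (u + 1) + 1 = u + 1 := by
    simp only [glue, if_neg (by omega : ¬ u + 1 ≤ u), Nat.sub_self, h00]
  have hnot : ∀ j, u + 1 < j → j ≤ s + 1 → glue u g h j + 1 ≠ j := by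
    intro j hj1 hj2
    simp only [glue, if_neg (by omega : ¬ j ≤ u)]
    have := hh.2.1 (j - (u + 1))
    omega
  have hle : u + 1 ≤ tOf s (glue u g h) := Nat.le_findGreatest (by omega) hPt
  have hge : tOf s (glue u g h) ≤ s + 1 := Nat.findGreatest_le _
  by_contra hne
  have hspec : glue u g h (tOf s (glue u g h)) + 1 = tOf s (glue u g h) :=
    Nat.findGreatest_spec (P := fun j => glue u g h j + 1 = j) (m := u + 1) (by omega) hPt
  exact hnot _ (by omega) hge hspec

lemma glue_recover {s : ℕ} {f : ℕ → ℕ} (hf : f ∈ MSeq15 (s + 1)) :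
    glue (tOf s f - 1) (lowOf (tOf s f - 1) f) (highOf (tOf s f) (s - (tOf s f - 1)) f) = f := by
  obtain ⟨h1, h2, h3, h4⟩ := tOf_facts s f hf
  have fm := hf.1
  have fp := hf.2.2
  funext i
  simp only [glue, lowOf, highOf]
  set t := tOf s f with htdef
  by_cases hiu : i ≤ t - 1
  · rw [if_pos hiu]
    congr 1
    omega
  · rw [if_neg hiu]
    have hmono : f t ≤ f (t + min (i - (t - 1 + 1)) (s - (t - 1))) := fm (by omega)
    by_cases his : i ≤ s + 1
    · have e2 : t + min (i - (t - 1 + 1)) (s - (t - 1)) = i := by omega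
      rw [e2] at hmono ⊢
      omega
    · have e2 : t + min (i - (t - 1 + 1)) (s - (t - 1)) = s + 1 := by omega
      rw [e2] at hmono ⊢
      rw [fp i (by omega)]
      omega

noncomputable def decompEquiv (s : ℕ) :
    (Σ u : Fin (s+1), (MSeq15 (u : ℕ) × MSeq15 (s - (u : ℕ)))) ≃ MSeq15 (s+1) := by
  apply Equiv.ofBijective
    (fun x => (⟨glue (x.1 : ℕ) x.2.1.1 x.2.2.1,
      glue_mem (Nat.lt_succ_iff.mp x.1.isLt) x.2.1.2 x.2.2.2⟩ : MSeq15 (s+1)))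
  constructor
  · rintro ⟨⟨u, hu⟩, ⟨g, hg⟩, ⟨h, hh⟩⟩ ⟨⟨u', hu'⟩, ⟨g', hg'⟩, ⟨h', hh'⟩⟩ heq
    have hgu : g ∈ MSeq15 u := hg
    have hhu : h ∈ MSeq15 (s - u) := hh
    have hgu' : g' ∈ MSeq15 u' := hg'
    have hhu' : h' ∈ MSeq15 (s - u') := hh'
    simp only [Subtype.mk.injEq] at heq
    have huu : u = u' := by
      have t1 := tOf_glue (by omega : u ≤ s) hgu hhu
      have t2 := tOf_glue (by omega : u' ≤ s) hgu' hhu'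
      rw [heq] at t1
      omega
    subst huu
    have hgg : g = g' := by
      funext i
      by_cases hiu : i ≤ u
      · have := congrFun heq i
        simpa only [glue, if_pos hiu] using this
      · have := congrFun heq u
        simp only [glue, if_pos (le_refl u)] at this
        rw [hgu.2.2 i (by omega), hgu'.2.2 i (by omega), this]
    have hhh : h = h' := by
      funext k
      by_cases hks : k ≤ s - u
      · have := congrFun heq (u + 1 + k)
        simp only [glue, if_neg (by omega : ¬ u + 1 + k ≤ u),
          Nat.add_sub_cancel_left] at this
        omega
      · have := congrFun heq (u + 1 + (s - u))
        simp only [glue, if_neg (by omega : ¬ u + 1 + (s - u) ≤ u)] at this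
        have e : u + 1 + (s - u) - (u + 1) = s - u := by omega
        rw [e] at this
        rw [hhu.2.2 k (by omega), hhu'.2.2 k (by omega)]
        omega
    subst hgg
    subst hhh
    rfl
  · rintro ⟨f, hf⟩
    refine ⟨⟨⟨tOf s f - 1, by have := (tOf_facts s f hf).2.1; omega⟩,
      ⟨lowOf (tOf s f - 1) f, low_mem hf.1 hf.2.1 _⟩,
      ⟨highOf (tOf s f) (s - (tOf s f - 1)) f, by
        obtain ⟨h1, h2, h3, h4⟩ := tOf_facts s f hf
        exact high_mem hf.1 hf.2.1 h1 h2 h3 h4⟩⟩, ?_⟩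
    exact Subtype.ext (glue_recover hf)

lemma nat_card_sigma {ι : Type*} [Fintype ι] (β : ι → Type*) [∀ i, Finite (β i)] :
    Nat.card (Σ i, β i) = ∑ i, Nat.card (β i) := by
  letI : ∀ i, Fintype (β i) := fun i => Fintype.ofFinite _
  simp only [Nat.card_eq_fintype_card]
  exact Fintype.card_sigma

lemma card_mseq (s : ℕ) : Nat.card (MSeq15 s) = catalan s := by
  induction s using Nat.strong_induction_on with
  | _ s ih =>
    match s, ih with
    | 0, _ =>
      have hs : MSeq15 0 = {fun _ => 0} := by
        ext f
        simp only [Set.mem_singleton_iff]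
        constructor
        · rintro ⟨hm, hb, hp⟩
          funext i
          rw [hp i (Nat.zero_le i)]
          have := hb 0
          omega
        · rintro rfl
          exact ⟨monotone_const, fun i => by simp, fun i _ => rfl⟩
      rw [hs, catalan_zero]
      exact Nat.card_unique
    | (s+1), ih =>
      rw [Nat.card_congr (decompEquiv s).symm, nat_card_sigma, catalan_succ]
      apply Finset.sum_congr rfl
      intro u _
      rw [Nat.card_prod, ih u u.isLt, ih (s - u) (by omega)]

def bOf (n : ℕ) (f : ℕ → ℕ) : Set (ℕ × ℕ) :=
  {q | 1 ≤ q.2 ∧ q.2 ≤ q.1 ∧ q.1 ≤ n - 2 ∧ f (q.1 + 1) < q.2}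

lemma bOf_inj {n : ℕ} (hn : 2 ≤ n) {f g : ℕ → ℕ}
    (hf : f ∈ MSeq15 (n - 1)) (hg : g ∈ MSeq15 (n - 1)) (h : bOf n f = bOf n g) : f = g := by
  have key : ∀ (p q : ℕ → ℕ), p ∈ MSeq15 (n - 1) → q ∈ MSeq15 (n - 1) →
      bOf n p ⊆ bOf n q → ∀ k, 1 ≤ k → k ≤ n - 1 → q k ≤ p k := by
    intro p q hp hq hsub k hk1 hk2
    by_contra hc
    have hb := hq.2.1 k
    have hmem : (k - 1, q k) ∈ bOf n p := ⟨by omega, by omega, by omega, by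
      have : k - 1 + 1 = k := by omega
      rw [this]; omega⟩
    have := hsub hmem
    obtain ⟨-, -, -, h4⟩ := this
    have e : k - 1 + 1 = k := by omega
    rw [e] at h4
    omega
  funext k
  rcases Nat.eq_zero_or_pos k with rfl | hk
  · have := hf.2.1 0
    have := hg.2.1 0
    omega
  by_cases hk2 : k ≤ n - 1
  · have h1 := key f g hf hg (le_of_eq h) k hk hk2
    have h2 := key g f hg hf (le_of_eq h.symm) k hk hk2
    omega
  · rw [hf.2.2 k (by omega), hg.2.2 k (by omega)]
    have h1 := key f g hf hg (le_of_eq h) (n-1) (by omega) (le_refl _)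
    have h2 := key g f hg hf (le_of_eq h.symm) (n-1) (by omega) (le_refl _)
    omega

lemma bOf_surj {n : ℕ} (hn : 2 ≤ n) {B : Set (ℕ × ℕ)}
    (hB1 : ∀ q ∈ B, 1 ≤ q.2 ∧ q.2 ≤ q.1 ∧ q.1 ≤ n - 2)
    (hB2 : ∀ i j : ℕ, (i, j) ∈ B →
      (∀ k, j ≤ k → k ≤ i → (k, j) ∈ B) ∧ (∀ l, j ≤ l → l ≤ i → (i, l) ∈ B)) :
    ∃ f ∈ MSeq15 (n - 1), bOf n f = B := by
  classical
  set a : ℕ → ℕ := fun i => Nat.findGreatest (fun j => (i, j) ∉ B) i with ha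
  have hval : ∀ i, (i, a i) ∉ B := by
    intro i
    have h0 : (i, 0) ∉ B := by
      intro hc
      have := (hB1 _ hc).1
      omega
    exact Nat.findGreatest_spec (P := fun j => (i, j) ∉ B) (m := 0) (Nat.zero_le i) h0
  have hle : ∀ i, a i ≤ i := fun i => Nat.findGreatest_le i
  have hrow : ∀ i j, i ≤ n - 2 → 1 ≤ j → j ≤ i → ((i, j) ∈ B ↔ a i < j) := by
    intro i j hi hj1 hj2
    constructor
    · intro hmem
      by_contra hc
      have := (hB2 i j hmem).2 (a i) (by omega) (hle i)
      exact hval i this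
    · intro hc
      by_contra hmem
      exact Nat.findGreatest_is_greatest (P := fun j => (i, j) ∉ B) (n := i) hc hj2 hmem
  have amono : ∀ i i', i ≤ i' → i' ≤ n - 2 → a i ≤ a i' := by
    intro i i' hii hi'
    by_contra hc
    have h1 : (i', a i) ∈ B := (hrow i' (a i) hi' (by omega) (by have := hle i; omega)).2 (by omega)
    have h2 := (hB2 i' (a i) h1).1 i (hle i) hii
    exact hval i h2
  refine ⟨fun k => a (min (k - 1) (n - 2)), ⟨?_, ?_, ?_⟩, ?_⟩
  · intro x y hxy
    exact amono _ _ (by omega) (by omega)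
  · intro i
    show a (min (i - 1) (n - 2)) ≤ i - 1
    have := hle (min (i - 1) (n - 2))
    omega
  · intro i hi
    show a (min (i - 1) (n - 2)) = a (min (n - 1 - 1) (n - 2))
    have e : min (i - 1) (n - 2) = min (n - 1 - 1) (n - 2) := by omega
    rw [e]
  · ext ⟨i, j⟩
    simp only [bOf, Set.mem_setOf_eq]
    constructor
    · rintro ⟨h1, h2, h3, h4⟩
      have e : min (i + 1 - 1) (n - 2) = i := by omega
      rw [e] at h4
      exact (hrow i j h3 h1 h2).2 h4
    · intro hmem
      obtain ⟨h1, h2, h3⟩ := hB1 _ hmem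
      refine ⟨h1, h2, h3, ?_⟩
      have e : min (i + 1 - 1) (n - 2) = i := by omega
      rw [e]
      exact (hrow i j h3 h1 h2).1 hmem

lemma bOf_mem {n : ℕ} {f : ℕ → ℕ} (hf : f ∈ MSeq15 (n - 1)) :
    (∀ q ∈ bOf n f, 1 ≤ q.2 ∧ q.2 ≤ q.1 ∧ q.1 ≤ n - 2) ∧
    (∀ i j : ℕ, (i, j) ∈ bOf n f →
      (∀ k, j ≤ k → k ≤ i → (k, j) ∈ bOf n f) ∧
      (∀ l, j ≤ l → l ≤ i → (i, l) ∈ bOf n f)) := by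
  constructor
  · exact fun q hq => ⟨hq.1, hq.2.1, hq.2.2.1⟩
  · intro i j hij
    obtain ⟨h1', h2', h3', h4'⟩ := hij
    have h1 : 1 ≤ j := h1'
    have h2 : j ≤ i := h2'
    have h3 : i ≤ n - 2 := h3'
    have h4 : f (i + 1) < j := h4'
    constructor
    · intro k hk1 hk2
      have h5 : f (k + 1) ≤ f (i + 1) := hf.1 (by omega : k + 1 ≤ i + 1)
      exact ⟨h1, hk1, by omega, show f (k + 1) < j by omega⟩
    · intro l hl1 hl2
      exact ⟨by omega, hl2, h3, show f (i + 1) < l by omega⟩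

theorem stmt15 (n : Nat) (hn : 2 ≤ n) :
    Set.ncard {B : Set (Nat × Nat) |
        (∀ q ∈ B, 1 ≤ q.2 ∧ q.2 ≤ q.1 ∧ q.1 ≤ n - 2) ∧
        (∀ i j : Nat, (i, j) ∈ B →
          (∀ k, j ≤ k → k ≤ i → (k, j) ∈ B) ∧
          (∀ l, j ≤ l → l ≤ i → (i, l) ∈ B))} =
      catalan (n - 1) := by
  rw [← Nat.card_coe_set_eq, ← card_mseq (n - 1)]
  apply Nat.card_congr
  refine (Equiv.ofBijective (fun f => ⟨bOf n f.1, bOf_mem f.2⟩) ⟨?_, ?_⟩).symm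
  · rintro ⟨f, hf⟩ ⟨g, hg⟩ hfg
    simp only [Subtype.mk.injEq] at hfg
    exact Subtype.ext (bOf_inj hn hf hg hfg)
  · rintro ⟨B, hB1, hB2⟩
    obtain ⟨f, hf, hB⟩ := bOf_surj hn hB1 hB2
    exact ⟨⟨f, hf⟩, Subtype.ext hB⟩
end

section
/- For fixed n ≥ 3, the quantity C_{n−1} − C_i·C_{n−1−i}, over integers 1 ≤ i ≤ n−2, is maximized exactly when {i, n−1−i} = {⌊(n−1)/2⌋, ⌈(n−1)/2⌉}; that is, the product C_i·C_{n−1−i} is minimized at the middle. The maximum value is C_{n−1} − C_{⌊(n−1)/2⌋}·C_{⌈(n−1)/2⌉}. -/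
lemma cat_pos (n : ℕ) : 0 < catalan n := by
  have h := succ_mul_catalan_eq_centralBinom n
  have h2 := Nat.centralBinom_pos n
  rcases Nat.eq_zero_or_pos (catalan n) with h0 | h0
  · rw [h0, mul_zero] at h; omega
  · exact h0

lemma cat_key (m : ℕ) : (m + 2) * catalan (m + 1) = 2 * (2 * m + 1) * catalan m := by
  have h1 := succ_mul_catalan_eq_centralBinom (m + 1)
  have h2 := succ_mul_catalan_eq_centralBinom m
  have h3 := Nat.succ_mul_centralBinom_succ m
  have key : (m + 1) * ((m + 2) * catalan (m + 1)) = (m + 1) * (2 * (2 * m + 1) * catalan m) := by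
    calc (m + 1) * ((m + 2) * catalan (m + 1)) = (m + 1) * ((m + 1 + 1) * catalan (m + 1)) := by ring
      _ = (m + 1) * Nat.centralBinom (m + 1) := by rw [h1]
      _ = 2 * (2 * m + 1) * Nat.centralBinom m := h3
      _ = 2 * (2 * m + 1) * ((m + 1) * catalan m) := by rw [h2]
      _ = (m + 1) * (2 * (2 * m + 1) * catalan m) := by ring
  exact Nat.eq_of_mul_eq_mul_left (by omega) key

lemma cat_step (m l : ℕ) (h : m < l) :
    catalan (m + 1) * catalan l < catalan m * catalan (l + 1) := by
  have km := cat_key m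
  have kl := cat_key l
  have pm := cat_pos m
  have pl := cat_pos l
  have hpoly : 2 * (2 * m + 1) * (l + 2) < 2 * (2 * l + 1) * (m + 2) := by nlinarith
  have key : (m + 2) * (l + 2) * (catalan (m + 1) * catalan l) <
      (m + 2) * (l + 2) * (catalan m * catalan (l + 1)) := by
    calc (m + 2) * (l + 2) * (catalan (m + 1) * catalan l)
        = ((m + 2) * catalan (m + 1)) * ((l + 2) * catalan l) := by ring
      _ = (2 * (2 * m + 1) * (l + 2)) * (catalan m * catalan l) := by rw [km]; ring
      _ < (2 * (2 * l + 1) * (m + 2)) * (catalan m * catalan l) :=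
          (Nat.mul_lt_mul_right (Nat.mul_pos pm pl)).2 hpoly
      _ = ((m + 2) * catalan m) * ((l + 2) * catalan (l + 1)) := by rw [kl]; ring
      _ = (m + 2) * (l + 2) * (catalan m * catalan (l + 1)) := by ring
  exact lt_of_mul_lt_mul_left key (Nat.zero_le _)

/-- one decreasing step toward the middle -/
lemma cat_step' (s j : ℕ) (h : 2 * j + 2 ≤ s) :
    catalan (j + 1) * catalan (s - (j + 1)) < catalan j * catalan (s - j) := by
  have hl : j < s - j - 1 := by omega
  have := cat_step j (s - j - 1) hl
  have e1 : s - j - 1 = s - (j + 1) := by omega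
  have e2 : s - j - 1 + 1 = s - j := by omega
  rw [e2, e1] at this
  exact this

/-- monotone decrease toward the middle -/
lemma cat_mono (s j k : ℕ) (hjk : j ≤ k) (hk : 2 * k ≤ s) :
    catalan k * catalan (s - k) ≤ catalan j * catalan (s - j) := by
  induction k with
  | zero => simp_all
  | succ k ih =>
    rcases Nat.eq_or_lt_of_le hjk with h | h
    · rw [h]
    · have h1 : j ≤ k := by omega
      have h2 : 2 * k ≤ s := by omega
      calc catalan (k + 1) * catalan (s - (k + 1)) ≤ catalan k * catalan (s - k) :=
            le_of_lt (cat_step' s k (by omega))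
        _ ≤ catalan j * catalan (s - j) := ih h1 h2

lemma cat_strict (s j k : ℕ) (hjk : j < k) (hk : 2 * k ≤ s) :
    catalan k * catalan (s - k) < catalan j * catalan (s - j) := by
  calc catalan k * catalan (s - k) ≤ catalan (j + 1) * catalan (s - (j + 1)) :=
        cat_mono s (j + 1) k hjk hk
    _ < catalan j * catalan (s - j) := cat_step' s j (by omega)

lemma cat_le_succ (n : ℕ) : catalan n ≤ catalan (n + 1) := by
  rw [catalan_succ']
  have hmem : ((0 : ℕ), n) ∈ Finset.HasAntidiagonal.antidiagonal n := by simp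
  have := Finset.single_le_sum (f := fun ij : ℕ × ℕ => catalan ij.1 * catalan ij.2)
    (fun i _ => Nat.zero_le _) hmem
  simpa [catalan_zero] using this

theorem stmt17 (n : Nat) (hn : 3 ≤ n) :
    ∀ i : Nat, 1 ≤ i → i ≤ n - 2 →
      (catalan ((n - 1) / 2) * catalan ((n - 1) - (n - 1) / 2) ≤
          catalan i * catalan (n - 1 - i) ∧
        catalan (n - 1) - catalan i * catalan (n - 1 - i) ≤
          catalan (n - 1) -
            catalan ((n - 1) / 2) * catalan ((n - 1) - (n - 1) / 2) ∧
        (catalan (n - 1) - catalan i * catalan (n - 1 - i) =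
            catalan (n - 1) -
              catalan ((n - 1) / 2) * catalan ((n - 1) - (n - 1) / 2) ↔
          (i = (n - 1) / 2 ∨ i = (n - 1) - (n - 1) / 2))) := by
  intro i hi1 hi2
  set s := n - 1 with hs
  have hs2 : 2 ≤ s := by omega
  have hi2' : i ≤ s - 1 := by omega
  set mid := s / 2 with hmid
  -- reduce i to i' = min i (s - i)
  set i' := min i (s - i) with hi'
  have hgi : catalan i * catalan (s - i) = catalan i' * catalan (s - i') := by
    rcases le_total i (s - i) with h | h
    · have : i' = i := by omega
      rw [this]
    · have h1 : i' = s - i := by omega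
      have h2 : s - (s - i) = i := by omega
      rw [h1, h2, mul_comm]
  have hmid_eq : s - mid = s - s / 2 := by rfl
  have hi'1 : 1 ≤ i' := by omega
  have hi'mid : i' ≤ mid := by omega
  have h2mid : 2 * mid ≤ s := by omega
  -- main inequality
  have hmin : catalan mid * catalan (s - mid) ≤ catalan i * catalan (s - i) := by
    rw [hgi]; exact cat_mono s i' mid hi'mid h2mid
  -- product bounded by catalan s
  have hbound : catalan i * catalan (s - i) ≤ catalan s := by
    rw [hgi]
    have h1 : catalan i' * catalan (s - i') ≤ catalan 1 * catalan (s - 1) :=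
      cat_mono s 1 i' hi'1 (by omega)
    have h2 : catalan 1 * catalan (s - 1) = catalan (s - 1) := by simp [catalan_one]
    have h3 : catalan (s - 1) ≤ catalan s := by
      have := cat_le_succ (s - 1)
      have e : s - 1 + 1 = s := by omega
      rwa [e] at this
    omega
  have hboundm : catalan mid * catalan (s - mid) ≤ catalan s := le_trans hmin hbound
  refine ⟨hmin, Nat.sub_le_sub_left hmin _, ?_, ?_⟩
  · intro heq
    have heq2 : catalan i * catalan (s - i) = catalan mid * catalan (s - mid) := by omega
    by_contra hcon
    push_neg at hcon
    have hne : i' < mid := by omega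
    have := cat_strict s i' mid hne h2mid
    rw [← hgi] at this
    omega
  · intro h
    rcases h with h | h
    · rw [h]
    · rw [h]
      have e : s - (s - mid) = mid := by omega
      rw [e, mul_comm]
end
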